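/- Consider a 2-dimensional grid graph on [n₁] × [n₂] (product of two complete graphs). An orientation σ of its edges is a unique sink orientation if and only if (i) every induced subgrid has a sink, and (ii) every subcube (induced by two elements in each coordinate, or by one element in one coordinate and two in the other) has a unique sink. -/

import Mathlib

/-! Two sinks `v`, `w` of a subgrid are also sinks of the subcube `{v.1, w.1} × {v.2, w.2}`
it contains, so uniqueness of sinks in subcubes forces `v = w`. -/

/-- Adjacency in the 2-dimensional grid graph: the vertices differ in exactly one
coordinate. -/
def Adj2 {n₁ n₂ : ℕ} (u v : Fin n₁ × Fin n₂) : Prop :=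
  u ≠ v ∧ (u.1 = v.1 ∨ u.2 = v.2)

/-- `v` is a sink of the induced subgrid on `N₁ × N₂`. -/
def SinkIn2 {n₁ n₂ : ℕ} (orient : Fin n₁ × Fin n₂ → Fin n₁ × Fin n₂ → Prop)
    (N₁ : Set (Fin n₁)) (N₂ : Set (Fin n₂)) (v : Fin n₁ × Fin n₂) : Prop :=
  v.1 ∈ N₁ ∧ v.2 ∈ N₂ ∧
    ∀ w : Fin n₁ × Fin n₂, w.1 ∈ N₁ → w.2 ∈ N₂ → Adj2 v w → ¬ orient v w

lemma Set.encard_pair_le_two {α : Type*} (x y : α) : ({x, y} : Set α).encard ≤ 2 :=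
  (Set.encard_insert_le _ _).trans (by norm_num)

section

variable {n₁ n₂ : ℕ} {orient : Fin n₁ × Fin n₂ → Fin n₁ × Fin n₂ → Prop}

lemma SinkIn2.anti {N₁ N₁' : Set (Fin n₁)} {N₂ N₂' : Set (Fin n₂)} {v : Fin n₁ × Fin n₂}
    (h : SinkIn2 orient N₁ N₂ v) (h₁ : N₁' ⊆ N₁) (h₂ : N₂' ⊆ N₂)
    (hv₁ : v.1 ∈ N₁') (hv₂ : v.2 ∈ N₂') : SinkIn2 orient N₁' N₂' v :=
  ⟨hv₁, hv₂, fun w hw₁ hw₂ hadj => h.2.2 w (h₁ hw₁) (h₂ hw₂) hadj⟩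

lemma SinkIn2.to_subcube {N₁ : Set (Fin n₁)} {N₂ : Set (Fin n₂)} {v w : Fin n₁ × Fin n₂}
    (hv : SinkIn2 orient N₁ N₂ v) (hw : SinkIn2 orient N₁ N₂ w) :
    SinkIn2 orient {v.1, w.1} {v.2, w.2} v := by
  refine hv.anti ?_ ?_ (by simp) (by simp) <;> rintro x (rfl | rfl)
  exacts [hv.1, hw.1, hv.2.1, hw.2.1]

lemma SinkIn2.eq_of_unique_sink_subcubes
    (hcube : ∀ (N₁ : Set (Fin n₁)) (N₂ : Set (Fin n₂)), N₁.Nonempty → N₂.Nonempty →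
        N₁.encard ≤ 2 → N₂.encard ≤ 2 → ∃! v, SinkIn2 orient N₁ N₂ v)
    {N₁ : Set (Fin n₁)} {N₂ : Set (Fin n₂)} {v w : Fin n₁ × Fin n₂}
    (hv : SinkIn2 orient N₁ N₂ v) (hw : SinkIn2 orient N₁ N₂ w) : v = w := by
  have hv' := hv.to_subcube hw
  have hw' : SinkIn2 orient {v.1, w.1} {v.2, w.2} w := by
    simpa only [Set.pair_comm] using hw.to_subcube hv
  exact (hcube _ _ (Set.insert_nonempty _ _) (Set.insert_nonempty _ _)
    (Set.encard_pair_le_two _ _) (Set.encard_pair_le_two _ _)).unique hv' hw'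

end

theorem stmt9_general {n₁ n₂ : ℕ} (orient : Fin n₁ × Fin n₂ → Fin n₁ × Fin n₂ → Prop) :
    (∀ (N₁ : Set (Fin n₁)) (N₂ : Set (Fin n₂)), N₁.Nonempty → N₂.Nonempty →
        ∃! v, SinkIn2 orient N₁ N₂ v) ↔
    ((∀ (N₁ : Set (Fin n₁)) (N₂ : Set (Fin n₂)), N₁.Nonempty → N₂.Nonempty →
        ∃ v, SinkIn2 orient N₁ N₂ v) ∧
     (∀ (N₁ : Set (Fin n₁)) (N₂ : Set (Fin n₂)), N₁.Nonempty → N₂.Nonempty →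
        N₁.encard ≤ 2 → N₂.encard ≤ 2 → ∃! v, SinkIn2 orient N₁ N₂ v)) := by
  refine ⟨fun huso => ⟨fun N₁ N₂ h₁ h₂ => (huso N₁ N₂ h₁ h₂).exists,
    fun N₁ N₂ h₁ h₂ _ _ => huso N₁ N₂ h₁ h₂⟩, ?_⟩
  rintro ⟨hsink, hcube⟩ N₁ N₂ h₁ h₂
  obtain ⟨v, hv⟩ := hsink N₁ N₂ h₁ h₂
  exact ⟨v, hv, fun w hw => SinkIn2.eq_of_unique_sink_subcubes hcube hw hv⟩

/-- A 2-dimensional grid orientation is a USO iff every induced subgrid has a sink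
and every subcube has a unique sink. -/
theorem stmt9 {n₁ n₂ : ℕ} (orient : Fin n₁ × Fin n₂ → Fin n₁ × Fin n₂ → Prop)
    (horient : ∀ u v, Adj2 u v → (orient u v ↔ ¬ orient v u)) :
    (∀ (N₁ : Set (Fin n₁)) (N₂ : Set (Fin n₂)), N₁.Nonempty → N₂.Nonempty →
        ∃! v, SinkIn2 orient N₁ N₂ v) ↔
    ((∀ (N₁ : Set (Fin n₁)) (N₂ : Set (Fin n₂)), N₁.Nonempty → N₂.Nonempty →
        ∃ v, SinkIn2 orient N₁ N₂ v) ∧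
     (∀ (N₁ : Set (Fin n₁)) (N₂ : Set (Fin n₂)), N₁.Nonempty → N₂.Nonempty →
        N₁.encard ≤ 2 → N₂.encard ≤ 2 → ∃! v, SinkIn2 orient N₁ N₂ v)) :=
  stmt9_general orient
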